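/- arXiv:2412.18132 — 7 statements merged into one kernel-verified Lean document; each statement's English description precedes it below -/
import Mathlib

section
/- (A,S) is a symplectic spectral pair in Z_n × Z_n if and only if (S,A) is a symplectic spectral pair in Z_n × Z_n. -/
open Complex
open scoped Classical

/-- The character value `e^{2πi t/n}` for `t : ZMod n`. -/
noncomputable def charVal (n : ℕ) (t : ZMod n) : ℂ :=
  Complex.exp (2 * Real.pi * Complex.I * (t.val : ℂ) / (n : ℂ))

/-- The symplectic form `⟨x,y⟩ = x₁y₂ - x₂y₁` on `ZMod n × ZMod n`. -/
def sympForm {n : ℕ} (x y : ZMod n × ZMod n) : ZMod n :=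
  x.1 * y.2 - x.2 * y.1

/-- Symplectic Fourier transform of the indicator of `A`. -/
noncomputable def symFT {n : ℕ} (A : Set (ZMod n × ZMod n)) (ξ : ZMod n × ZMod n) : ℂ :=
  ∑ᶠ a ∈ A, charVal n (sympForm a ξ)

/-- Euclidean Fourier transform of the indicator of `A`. -/
noncomputable def euclFT {n : ℕ} (A : Set (ZMod n × ZMod n)) (ξ : ZMod n × ZMod n) : ℂ :=
  ∑ᶠ a ∈ A, charVal n (a.1 * ξ.1 + a.2 * ξ.2)

/-- Difference set `ΔA = {a - a' : a,a' ∈ A, a ≠ a'}`. -/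
def diffSet {G : Type*} [AddGroup G] (A : Set G) : Set G :=
  {d | ∃ a ∈ A, ∃ a' ∈ A, a ≠ a' ∧ d = a - a'}

/-- `A ⊕ B = G`: every element of `G` is uniquely a sum `a + b` with `a ∈ A`, `b ∈ B`. -/
def IsTilingPair {G : Type*} [AddCommGroup G] (A B : Set G) : Prop :=
  ∀ g : G, ∃! p : G × G, p.1 ∈ A ∧ p.2 ∈ B ∧ p.1 + p.2 = g

/-- Symplectic orthogonal set `H^{⊥s}`. -/
def sympPerp {n : ℕ} (H : Set (ZMod n × ZMod n)) : Set (ZMod n × ZMod n) :=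
  {g | ∀ h ∈ H, sympForm g h = 0}

/-- `(A,S)` is a symplectic spectral pair: `|A| = |S|` and `ΔS ⊆ Z(1̂_A^{sym})`. -/
def IsSympSpectralPair {n : ℕ} (A S : Set (ZMod n × ZMod n)) : Prop :=
  Nat.card A = Nat.card S ∧ ∀ s ∈ S, ∀ s' ∈ S, s ≠ s' → symFT A (s - s') = 0

/-!
Let `M` be the matrix whose rows are the characters `a ↦ e^{2πi⟨a, s⟩/n}`, `s ∈ S`, restricted
to `A`. The entries of `M Mᴴ` are `1̂_A^{sym}(s - s')`, equal to `|A|` on the diagonal, so `(A, S)`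
is a spectral pair iff `M` is square with `M Mᴴ = |A| • 1`. Since the symplectic form is
antisymmetric, the matrix attached to `(S, A)` is `Mᴴ`, and for a square matrix `M Mᴴ = c • 1`
with `c ≠ 0` forces `Mᴴ M = c • 1`, as `c⁻¹ • Mᴴ` is then a two-sided inverse of `M`.
-/

open Matrix

theorem Matrix.conjTranspose_mul_self_eq_smul_one_of_mul_conjTranspose_self {ι κ R : Type*}
    [Fintype ι] [Fintype κ] [DecidableEq ι] [DecidableEq κ] [Field R] [StarRing R] (e : ι ≃ κ)
    {M : Matrix ι κ R} {c : R} (hc : c ≠ 0) (h : M * Mᴴ = c • 1) : Mᴴ * M = c • 1 := by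
  have hright : M * (c⁻¹ • Mᴴ) = 1 := by
    rw [Matrix.mul_smul, h, smul_smul, inv_mul_cancel₀ hc, one_smul]
  have hleft : (c⁻¹ • Mᴴ) * M = 1 := (Matrix.mul_eq_one_comm_of_equiv e).mp hright
  rw [Matrix.smul_mul, inv_smul_eq_iff₀ hc] at hleft
  exact hleft

lemma sympForm_sub_right {n : ℕ} (x y z : ZMod n × ZMod n) :
    sympForm x (y - z) = sympForm x y - sympForm x z := by
  simp only [sympForm, Prod.fst_sub, Prod.snd_sub]
  ring

lemma sympForm_swap {n : ℕ} (x y : ZMod n × ZMod n) : sympForm y x = -sympForm x y := by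
  simp only [sympForm]
  ring

section SpectralPair

variable {n : ℕ} [NeZero n]

lemma charVal_eq_stdAddChar (t : ZMod n) : charVal n t = ZMod.stdAddChar t := by
  rw [ZMod.stdAddChar_apply, ZMod.toCircle_apply, charVal]

lemma symFT_eq_sum (A : Set (ZMod n × ZMod n)) (ξ : ZMod n × ZMod n) :
    symFT A ξ = ∑ a : A, ZMod.stdAddChar (sympForm a ξ) := by
  simp only [symFT, charVal_eq_stdAddChar]
  rw [← finsum_set_coe_eq_finsum_mem, finsum_eq_sum_of_fintype]

lemma symFT_zero (A : Set (ZMod n × ZMod n)) : symFT A 0 = Nat.card A := by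
  simp [symFT_eq_sum, sympForm, Nat.card_eq_fintype_card]

noncomputable def sympCharMatrix (A S : Set (ZMod n × ZMod n)) : Matrix S A ℂ :=
  fun s a => ZMod.stdAddChar (sympForm a.1 s.1)

lemma sympCharMatrix_conjTranspose (A S : Set (ZMod n × ZMod n)) :
    (sympCharMatrix A S)ᴴ = sympCharMatrix S A := by
  ext a s
  simp only [sympCharMatrix, Matrix.conjTranspose_apply, RCLike.star_def, sympForm_swap a.1 s.1,
    AddChar.map_neg_eq_conj]

lemma sympCharMatrix_mul_conjTranspose_apply (A S : Set (ZMod n × ZMod n)) (s s' : S) :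
    (sympCharMatrix A S * (sympCharMatrix A S)ᴴ) s s' = symFT A (s - s') := by
  simp only [Matrix.mul_apply, Matrix.conjTranspose_apply, sympCharMatrix, symFT_eq_sum,
    sympForm_sub_right, AddChar.map_sub_eq_div, RCLike.star_def, AddChar.inv_apply_eq_conj,
    div_eq_mul_inv]

theorem isSympSpectralPair_iff_mul_conjTranspose (A S : Set (ZMod n × ZMod n)) :
    IsSympSpectralPair A S ↔ Nat.card A = Nat.card S ∧
      sympCharMatrix A S * (sympCharMatrix A S)ᴴ = (Nat.card A : ℂ) • 1 := by
  refine and_congr_right fun _ => ?_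
  simp only [← Matrix.ext_iff, sympCharMatrix_mul_conjTranspose_apply, Matrix.smul_apply,
    Matrix.one_apply, smul_eq_mul, mul_ite, mul_one, mul_zero, Subtype.forall, Subtype.mk.injEq]
  refine forall₄_congr fun s _ s' _ => ?_
  by_cases hss : s = s'
  · simp [hss, symFT_zero]
  · simp [hss]

theorem IsSympSpectralPair.symm {A S : Set (ZMod n × ZMod n)} (h : IsSympSpectralPair A S) :
    IsSympSpectralPair S A := by
  rw [isSympSpectralPair_iff_mul_conjTranspose] at h ⊢
  obtain ⟨hcard, hM⟩ := h
  refine ⟨hcard.symm, ?_⟩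
  rw [← sympCharMatrix_conjTranspose, Matrix.conjTranspose_conjTranspose, ← hcard]
  rcases isEmpty_or_nonempty A with _ | _
  · exact Subsingleton.elim _ _
  · obtain ⟨e⟩ := Finite.card_eq.mp hcard.symm
    exact Matrix.conjTranspose_mul_self_eq_smul_one_of_mul_conjTranspose_self e (by simp) hM

end SpectralPair

theorem sympSpectralPair_comm (n : ℕ) (hn : 0 < n) (A S : Set (ZMod n × ZMod n)) :
    IsSympSpectralPair A S ↔ IsSympSpectralPair S A :=
  have : NeZero n := ⟨hn.ne'⟩
  ⟨IsSympSpectralPair.symm, IsSympSpectralPair.symm⟩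
end

section
/- Let H and H' be subgroups of Z_n × Z_n with |H| = |H'| = n and Z_n × Z_n = H ⊕ H'. Then for every generator h of H (assuming H is cyclic of order n generated by h), there exists h' ∈ H' such that ⟨h,h'⟩ = h₁h'₂ - h₂h'₁ = 1 in Z_n. -/
open Complex
open scoped Classical

/-!
The form `⟨h, ·⟩` is an additive map onto an additive subgroup `K` of `ZMod n` containing both
coordinates `h.1 = ⟨h, (0, 1)⟩` and `h.2 = ⟨h, (-1, 0)⟩`. Hence `|K| • h = 0`, so the order `n` of
the generator `h` divides `|K|`, forcing `K = ZMod n`. Choose `g` with `⟨h, g⟩ = 1` and split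
`g = p + h'` with `p ∈ H`, `h' ∈ H'`; since `⟨h, ·⟩` vanishes on the multiples of `h`,
`⟨h, h'⟩ = 1`.
-/

section SympForm

variable {n : ℕ}

def sympFormAddHom (x : ZMod n × ZMod n) : (ZMod n × ZMod n) →+ ZMod n where
  toFun := sympForm x
  map_zero' := by simp [sympForm]
  map_add' y z := by simp only [sympForm, Prod.fst_add, Prod.snd_add]; ring

@[simp]
theorem sympFormAddHom_apply (x y : ZMod n × ZMod n) : sympFormAddHom x y = sympForm x y :=
  rfl

theorem sympForm_self (x : ZMod n × ZMod n) : sympForm x x = 0 := by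
  simp only [sympForm]; ring

theorem sympForm_eq_zero_of_mem_zmultiples {x y : ZMod n × ZMod n}
    (hy : y ∈ AddSubgroup.zmultiples x) : sympForm x y = 0 := by
  obtain ⟨m, rfl⟩ := hy
  rw [← sympFormAddHom_apply, map_zsmul, sympFormAddHom_apply, sympForm_self, smul_zero]

end SympForm

theorem addOrderOf_dvd_card_of_fst_mem_of_snd_mem {A : Type*} [AddGroup A] (K : AddSubgroup A)
    {x : A × A} (h₁ : x.1 ∈ K) (h₂ : x.2 ∈ K) : addOrderOf x ∣ Nat.card K := by
  have card_nsmul_eq_zero {a : A} (ha : a ∈ K) : Nat.card K • a = 0 :=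
    congrArg Subtype.val (card_nsmul_eq_zero' (G := K) (x := ⟨a, ha⟩))
  exact addOrderOf_dvd_of_nsmul_eq_zero
    (Prod.ext (card_nsmul_eq_zero h₁) (card_nsmul_eq_zero h₂))

theorem ZMod.addSubgroup_eq_top_of_addOrderOf_eq {n : ℕ} [NeZero n] (K : AddSubgroup (ZMod n))
    {x : ZMod n × ZMod n} (h₁ : x.1 ∈ K) (h₂ : x.2 ∈ K) (hx : addOrderOf x = n) : K = ⊤ := by
  have hdvd : Nat.card K ∣ n := by
    simpa only [Nat.card_zmod] using K.card_addSubgroup_dvd_card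
  have hcard : Nat.card K = n := Nat.dvd_antisymm hdvd <| by
    simpa only [hx] using addOrderOf_dvd_card_of_fst_mem_of_snd_mem K h₁ h₂
  exact K.eq_top_of_card_eq (by rw [hcard, Nat.card_zmod])

theorem exists_sympForm_eq_one_of_addOrderOf_eq {n : ℕ} [NeZero n] {x : ZMod n × ZMod n}
    (hx : addOrderOf x = n) : ∃ y, sympForm x y = 1 := by
  have h₁ : x.1 ∈ (sympFormAddHom x).range := ⟨(0, 1), by simp [sympForm]⟩
  have h₂ : x.2 ∈ (sympFormAddHom x).range := ⟨(-1, 0), by simp [sympForm]⟩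
  obtain ⟨y, hy⟩ : (1 : ZMod n) ∈ (sympFormAddHom x).range := by
    rw [ZMod.addSubgroup_eq_top_of_addOrderOf_eq _ h₁ h₂ hx]
    exact AddSubgroup.mem_top 1
  exact ⟨y, hy⟩

theorem exists_symplectic_partner_general (n : ℕ) (hn : 0 < n)
    (H H' : AddSubgroup (ZMod n × ZMod n))
    (hH : Nat.card H = n)
    (hsum : ∀ g : ZMod n × ZMod n, ∃! p : H × H', (p.1 : ZMod n × ZMod n) + (p.2 : ZMod n × ZMod n) = g)
    (h : ZMod n × ZMod n) (hgen : AddSubgroup.zmultiples h = H) :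
    ∃ h' ∈ H', sympForm h h' = 1 := by
  have : NeZero n := ⟨hn.ne'⟩
  have hord : addOrderOf h = n := by rw [← Nat.card_zmultiples h, hgen, hH]
  obtain ⟨g, hg⟩ := exists_sympForm_eq_one_of_addOrderOf_eq hord
  obtain ⟨⟨p, h'⟩, hpg, -⟩ := hsum g
  have hp : sympForm h p = 0 := sympForm_eq_zero_of_mem_zmultiples (hgen ▸ p.2)
  refine ⟨h', h'.2, ?_⟩
  rwa [← hpg, ← sympFormAddHom_apply, map_add, sympFormAddHom_apply, hp, zero_add] at hg

theorem exists_symplectic_partner (n : ℕ) (hn : 0 < n)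
    (H H' : AddSubgroup (ZMod n × ZMod n))
    (hH : Nat.card H = n) (hH' : Nat.card H' = n)
    (hsum : ∀ g : ZMod n × ZMod n, ∃! p : H × H', (p.1 : ZMod n × ZMod n) + (p.2 : ZMod n × ZMod n) = g)
    (h : ZMod n × ZMod n) (hgen : AddSubgroup.zmultiples h = H) :
    ∃ h' ∈ H', sympForm h h' = 1 :=
  exists_symplectic_partner_general n hn H H' hH hsum h hgen
end

section
/- A subgroup H of Z_n × Z_n is a Lagrangian (i.e., H = H^{⊥s}) if and only if |H| = n. -/
open Complex
open scoped Classical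

/-!
Write `G = ZMod n × ZMod n` and `ω = sympForm`. A finite abelian group has at most as many
homomorphisms into `ZMod n` as elements, since composing with `e^{2πi · / n}` embeds them into its
complex characters. The pairing `ω` embeds `G ⧸ H^⊥` into `Hom(H, ZMod n)` and, being
nondegenerate, `H` into `Hom(G ⧸ H^⊥, ZMod n)`; hence `|H| · |H^⊥| = n²`, and `H = H^⊥` forces
`|H| = n`.

Conversely, a subgroup `H` with `|H| ∣ n` is isotropic. Let `f : H → ZMod n` be the first
projection, `α = |ker f|`, `β = |range f|` and `n = αβc`. First coordinates of elements of `H` are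
killed by `β`, so they are multiples of `αc`: `u₁ = αc s`, `v₁ = αc t`. Then `w = t u - s v` lies in
`ker f`, so `α w₂ = 0`, and `ω(u, v) = -c α w₂ = 0`. If `|H| = n` then `H ⊆ H^⊥` and both have
`n` elements.
-/

open Function

theorem ZMod.exists_eq_mul_of_natCast_mul_eq_zero {n a m : ℕ} [NeZero n] (h : a * m = n)
    {x : ZMod n} (hx : (a : ZMod n) * x = 0) : ∃ s : ZMod n, x = m * s := by
  rw [← ZMod.natCast_zmod_val x] at hx ⊢
  norm_cast at hx
  rw [ZMod.natCast_eq_zero_iff] at hx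
  subst h
  have ha : 0 < a := Nat.pos_of_ne_zero fun ha => NeZero.ne (a * m) (by rw [ha, zero_mul])
  obtain ⟨k, hk⟩ := Nat.dvd_of_mul_dvd_mul_left ha hx
  exact ⟨k, by rw [hk]; push_cast; rfl⟩

theorem Nat.card_le_card_of_injective_addMonoidHom_zmod {P Q : Type*} [AddCommGroup P] [Finite P]
    {n : ℕ} [NeZero n] (f : Q → (P →+ ZMod n)) (hf : Injective f) : Nat.card Q ≤ Nat.card P := by
  have := Fintype.ofFinite P
  calc Nat.card Q ≤ Nat.card (AddChar P ℂ) :=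
        Nat.card_le_card_of_injective _
          ((AddChar.compAddMonoidHom_injective_right _ ZMod.injective_stdAddChar).comp hf)
    _ = Nat.card P := by rw [Nat.card_eq_fintype_card, AddChar.card_eq, Nat.card_eq_fintype_card]

variable {n : ℕ}

lemma sympForm_add_left (x y z : ZMod n × ZMod n) :
    sympForm (x + y) z = sympForm x z + sympForm y z := by
  simp only [sympForm, Prod.fst_add, Prod.snd_add]; ring

lemma sympForm_add_right (x y z : ZMod n × ZMod n) :
    sympForm x (y + z) = sympForm x y + sympForm x z := by
  simp only [sympForm, Prod.fst_add, Prod.snd_add]; ring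

lemma eq_of_forall_sympForm_eq {y z : ZMod n × ZMod n} (h : ∀ x, sympForm x y = sympForm x z) :
    y = z := by
  have h₁ := h (1, 0)
  have h₂ := h (0, 1)
  simp only [sympForm, one_mul, zero_mul, sub_zero, zero_sub, neg_inj] at h₁ h₂
  exact Prod.ext h₂ h₁

def sympFormHom : (ZMod n × ZMod n) →+ (ZMod n × ZMod n) →+ ZMod n :=
  AddMonoidHom.mk' (fun x => AddMonoidHom.mk' (sympForm x) (sympForm_add_right x))
    fun x y => by ext z; exact sympForm_add_left x y z

@[simp] lemma sympFormHom_apply (x y : ZMod n × ZMod n) : sympFormHom x y = sympForm x y := rfl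

def sympPerpHom (H : AddSubgroup (ZMod n × ZMod n)) :
    (ZMod n × ZMod n) →+ (H →+ ZMod n) :=
  (AddMonoidHom.compHom' H.subtype).comp sympFormHom

lemma coe_ker_sympPerpHom (H : AddSubgroup (ZMod n × ZMod n)) :
    ((sympPerpHom H).ker : Set (ZMod n × ZMod n)) = sympPerp (H : Set (ZMod n × ZMod n)) := by
  ext x
  simp [sympPerpHom, sympPerp, DFunLike.ext_iff]

theorem card_mul_card_ker_sympPerpHom [NeZero n] (H : AddSubgroup (ZMod n × ZMod n)) :
    Nat.card H * Nat.card (sympPerpHom H).ker = n ^ 2 := by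
  set K := (sympPerpHom H).ker
  have hquot_le : Nat.card ((ZMod n × ZMod n) ⧸ K) ≤ Nat.card H :=
    Nat.card_le_card_of_injective_addMonoidHom_zmod _ (QuotientAddGroup.kerLift_injective _)
  have hle_quot : Nat.card H ≤ Nat.card ((ZMod n × ZMod n) ⧸ K) := by
    refine Nat.card_le_card_of_injective_addMonoidHom_zmod
      (fun h : H => QuotientAddGroup.lift K (sympFormHom.flip h) fun x hx => ?_) fun h h' hhh' => ?_
    · have hx' : x ∈ sympPerp (H : Set (ZMod n × ZMod n)) := by
        rw [← coe_ker_sympPerpHom]; exact hx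
      exact hx' h h.2
    · refine Subtype.ext <| eq_of_forall_sympForm_eq fun x => ?_
      exact DFunLike.congr_fun hhh' (x : (ZMod n × ZMod n) ⧸ K)
  rw [le_antisymm hle_quot hquot_le, ← AddSubgroup.card_eq_card_quotient_mul_card_addSubgroup,
    Nat.card_prod, Nat.card_zmod, sq]

theorem sympForm_eq_zero_of_card_dvd [NeZero n] {H : AddSubgroup (ZMod n × ZMod n)}
    (hH : Nat.card H ∣ n) {u v : ZMod n × ZMod n} (hu : u ∈ H) (hv : v ∈ H) :
    sympForm u v = 0 := by
  set f : H →+ ZMod n := (AddMonoidHom.fst _ _).comp H.subtype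
  obtain ⟨c, hc⟩ := hH
  have hcard : Nat.card f.range * (Nat.card f.ker * c) = n := by
    have hsplit : Nat.card f.ker * Nat.card f.range = Nat.card H := by
      rw [← AddSubgroup.index_ker]; exact f.ker.card_mul_index
    rw [← hsplit] at hc; linarith
  have hfst : ∀ w ∈ H, ∃ s : ZMod n, w.1 = (Nat.card f.ker * c : ℕ) * s := fun w hw => by
    refine ZMod.exists_eq_mul_of_natCast_mul_eq_zero hcard ?_
    have := congrArg Subtype.val (card_nsmul_eq_zero' (x := (⟨w.1, ⟨w, hw⟩, rfl⟩ : f.range)))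
    simpa using this
  obtain ⟨s, hs⟩ := hfst u hu
  obtain ⟨t, ht⟩ := hfst v hv
  have hwH : t • u - s • v ∈ H :=
    let Hₙ := AddSubgroup.toZModSubmodule n H
    Hₙ.sub_mem (Hₙ.smul_mem t hu) (Hₙ.smul_mem s hv)
  have hw : (Nat.card f.ker : ZMod n) * (t * u.2 - s * v.2) = 0 := by
    have hker : (⟨_, hwH⟩ : H) ∈ f.ker := by
      change t * u.1 - s * v.1 = 0
      rw [hs, ht]; ring
    have := congrArg (fun w : f.ker => (w.1.1).2) (card_nsmul_eq_zero' (x := (⟨_, hker⟩ : f.ker)))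
    simpa using this
  simp only [sympForm]
  rw [hs, ht]
  push_cast
  linear_combination (-(c : ZMod n)) * hw

theorem lagrangian_iff_card (n : ℕ) (hn : 0 < n) (H : AddSubgroup (ZMod n × ZMod n)) :
    (H : Set (ZMod n × ZMod n)) = sympPerp (H : Set (ZMod n × ZMod n)) ↔
      Nat.card H = n := by
  have : NeZero n := ⟨hn.ne'⟩
  have hcard := card_mul_card_ker_sympPerpHom H
  rw [← coe_ker_sympPerpHom, SetLike.coe_set_eq]
  constructor
  · intro hH
    rw [← hH, ← sq] at hcard
    exact Nat.pow_left_injective two_ne_zero hcard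
  · intro hH
    refine AddSubgroup.eq_of_le_of_card_ge (fun u hu => ?_) ?_
    · rw [← SetLike.mem_coe, coe_ker_sympPerpHom]
      exact fun v hv => sympForm_eq_zero_of_card_dvd hH.dvd hu hv
    · rw [hH, sq] at hcard
      rw [hH, Nat.eq_of_mul_eq_mul_left hn hcard]
end

section
/- For any subgroup H of Z_n × Z_n, |H| · |H^{⊥s}| = n². -/
open Complex
open scoped Classical

theorem card_mul_card_sympPerp (n : ℕ) (hn : 0 < n) (H : AddSubgroup (ZMod n × ZMod n)) :
    Nat.card H * Nat.card (sympPerp (H : Set (ZMod n × ZMod n))) = n ^ 2 := by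
  haveI : NeZero n := ⟨hn.ne'⟩
  have hprim : IsPrimitiveRoot (Complex.exp (2 * Real.pi * Complex.I / n)) n :=
    Complex.isPrimitiveRoot_exp n hn.ne'
  have hpow : (Complex.exp (2 * Real.pi * Complex.I / n)) ^ n = 1 := hprim.pow_eq_one
  set ψ : AddChar (ZMod n) ℂ := AddChar.zmodChar n hpow with hψdef
  have hψ1 : ∀ a : ZMod n, ψ a = 1 ↔ a = 0 := by
    intro a
    rw [hψdef, AddChar.zmodChar_apply, hprim.pow_eq_one_iff_dvd]
    constructor
    · intro hdvd
      have := Nat.eq_zero_of_dvd_of_lt hdvd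
      rcases Nat.eq_zero_or_pos a.val with h0 | hp
      · exact (ZMod.val_eq_zero a).mp h0
      · exact absurd (ZMod.val_lt a) (not_lt.mpr (Nat.le_of_dvd hp hdvd))
    · rintro rfl; simp
  -- inner expression as a character in g
  have key1 : ∀ h : ZMod n × ZMod n,
      (∑ g : ZMod n × ZMod n, ψ (sympForm g h)) = if h = 0 then ((n : ℂ) ^ 2) else 0 := by
    intro h
    let φ : AddChar (ZMod n × ZMod n) ℂ :=
      { toFun := fun g => ψ (sympForm g h)
        map_zero_eq_one' := by simp [sympForm]
        map_add_eq_mul' := by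
          intro a b
          rw [← AddChar.map_add_eq_mul]
          congr 1
          simp only [sympForm, Prod.fst_add, Prod.snd_add]
          ring }
    have hφ : ∀ g, φ g = ψ (sympForm g h) := fun _ => rfl
    have hsum := AddChar.sum_eq_ite φ
    have hiff : φ = 0 ↔ h = 0 := by
      constructor
      · intro h0
        have h1 : φ (1, 0) = 1 := by rw [h0]; simp
        have h2 : φ (0, 1) = 1 := by rw [h0]; simp
        rw [hφ] at h1 h2
        have e1 : sympForm ((1, 0) : ZMod n × ZMod n) h = h.2 := by
          simp [sympForm]
        have e2 : sympForm ((0, 1) : ZMod n × ZMod n) h = -h.1 := by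
          simp [sympForm]
        rw [e1, hψ1] at h1
        rw [e2, hψ1, neg_eq_zero] at h2
        exact Prod.ext h2 h1
      · rintro rfl
        ext g
        simp only [hφ, AddChar.zero_apply]
        have : sympForm g (0 : ZMod n × ZMod n) = 0 := by simp [sympForm]
        rw [this]; simp
    calc (∑ g : ZMod n × ZMod n, ψ (sympForm g h)) = ∑ g, φ g := by
          simp only [hφ]
      _ = if φ = 0 then (Fintype.card (ZMod n × ZMod n) : ℂ) else 0 := hsum
      _ = if h = 0 then ((n : ℂ) ^ 2) else 0 := by
          rw [if_congr hiff rfl rfl]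
          congr 1
          simp [Fintype.card_prod, ZMod.card, sq]
  -- inner sum over H as a character in h
  have key2 : ∀ g : ZMod n × ZMod n,
      (∑ h : H, ψ (sympForm g (h : ZMod n × ZMod n))) =
        if g ∈ sympPerp (H : Set (ZMod n × ZMod n)) then (Fintype.card H : ℂ) else 0 := by
    intro g
    let χ : AddChar H ℂ :=
      { toFun := fun h => ψ (sympForm g (h : ZMod n × ZMod n))
        map_zero_eq_one' := by
          simp [sympForm]
        map_add_eq_mul' := by
          intro a b
          rw [← AddChar.map_add_eq_mul]
          congr 1
          simp only [sympForm, AddSubgroup.coe_add, Prod.fst_add, Prod.snd_add]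
          ring }
    have hχ : ∀ h : H, χ h = ψ (sympForm g (h : ZMod n × ZMod n)) := fun _ => rfl
    have hsum := AddChar.sum_eq_ite χ
    have hiff : χ = 0 ↔ g ∈ sympPerp (H : Set (ZMod n × ZMod n)) := by
      constructor
      · intro h0 h hh
        have : χ ⟨h, hh⟩ = 1 := by rw [h0]; simp
        rw [hχ, hψ1] at this
        exact this
      · intro hg
        ext h
        rw [hχ, AddChar.zero_apply, hg (h : ZMod n × ZMod n) h.2]
        simp
    calc (∑ h : H, ψ (sympForm g (h : ZMod n × ZMod n))) = ∑ h, χ h := by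
          simp only [hχ]
      _ = if χ = 0 then (Fintype.card H : ℂ) else 0 := hsum
      _ = _ := if_congr hiff rfl rfl
  -- double counting
  have hswap :
      (∑ g : ZMod n × ZMod n, ∑ h : H, ψ (sympForm g (h : ZMod n × ZMod n))) =
      (∑ h : H, ∑ g : ZMod n × ZMod n, ψ (sympForm g (h : ZMod n × ZMod n))) :=
    Finset.sum_comm
  have hleft :
      (∑ g : ZMod n × ZMod n, ∑ h : H, ψ (sympForm g (h : ZMod n × ZMod n))) =
      (Fintype.card H : ℂ) *
        (Nat.card (sympPerp (H : Set (ZMod n × ZMod n))) : ℂ) := by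
    simp only [key2]
    rw [← Finset.sum_filter]
    rw [Finset.sum_const, nsmul_eq_mul, mul_comm]
    congr 2
    rw [Nat.card_eq_fintype_card, Fintype.card_subtype]
  have hright :
      (∑ h : H, ∑ g : ZMod n × ZMod n, ψ (sympForm g (h : ZMod n × ZMod n))) =
      ((n : ℂ) ^ 2) := by
    simp only [key1]
    rw [← Finset.sum_filter]
    rw [Finset.sum_const, nsmul_eq_mul]
    have hfil : (Finset.univ.filter fun h : H => (h : ZMod n × ZMod n) = 0) = {0} := by
      ext h
      simp only [Finset.mem_filter, Finset.mem_univ, true_and, Finset.mem_singleton]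
      constructor
      · intro hh
        exact Subtype.ext hh
      · rintro rfl; rfl
    rw [hfil]
    simp
  have hfin : (Fintype.card H : ℂ) *
      (Nat.card (sympPerp (H : Set (ZMod n × ZMod n))) : ℂ) = (n : ℂ) ^ 2 := by
    rw [← hleft, hswap, hright]
  have : (Nat.card H * Nat.card (sympPerp (H : Set (ZMod n × ZMod n))) : ℂ) =
      ((n ^ 2 : ℕ) : ℂ) := by
    push_cast
    rw [Nat.card_eq_fintype_card]
    exact hfin
  exact_mod_cast this
end

section
/- If A is a symplectic spectral set in Z_{p^m} × Z_{p^m} with |A| > 1, then p divides |A|. -/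
open Complex
open scoped Classical

lemma key_vanishing (p m : ℕ) (hp : p.Prime) (hm : 1 ≤ m)
    (T : Finset (ZMod (p ^ m) × ZMod (p ^ m))) (d : ZMod (p ^ m) × ZMod (p ^ m))
    (h : ∑ a ∈ T, charVal (p ^ m) (sympForm a d) = 0) : p ∣ T.card := by
  haveI : Fact p.Prime := ⟨hp⟩
  have hn : (p ^ m : ℕ) ≠ 0 := pow_ne_zero _ hp.ne_zero
  set ζ : ℂ := Complex.exp (2 * Real.pi * Complex.I / (p ^ m : ℕ)) with hζ_def
  have hζ : IsPrimitiveRoot ζ (p ^ m) := Complex.isPrimitiveRoot_exp _ hn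
  have hchar : ∀ t : ZMod (p ^ m), charVal (p ^ m) t = ζ ^ t.val := by
    intro t
    rw [hζ_def, ← Complex.exp_nat_mul]
    unfold charVal
    ring_nf
  set f : Polynomial ℤ := ∑ a ∈ T, Polynomial.X ^ ((sympForm a d).val) with hf_def
  have hf0 : Polynomial.aeval ζ f = 0 := by
    rw [hf_def, map_sum]
    simpa only [map_pow, Polynomial.aeval_X, ← hchar] using h
  have hdvd : Polynomial.cyclotomic (p ^ m) ℤ ∣ f := by
    rw [Polynomial.cyclotomic_eq_minpoly hζ (Nat.pos_of_ne_zero hn)]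
    exact minpoly.isIntegrallyClosed_dvd (hζ.isIntegral (Nat.pos_of_ne_zero hn)) hf0
  obtain ⟨q, hq⟩ := hdvd
  have h1 : f.eval 1 = (T.card : ℤ) := by
    rw [hf_def, Polynomial.eval_finset_sum]
    simp
  obtain ⟨k, rfl⟩ : ∃ k, m = k + 1 := ⟨m - 1, (Nat.succ_pred_eq_of_pos hm).symm⟩
  have h2 : (Polynomial.cyclotomic (p ^ (k + 1)) ℤ).eval 1 = p :=
    Polynomial.eval_one_cyclotomic_prime_pow k
  have : (p : ℤ) ∣ (T.card : ℤ) := by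
    rw [← h1, hq, Polynomial.eval_mul, h2]
    exact Dvd.intro _ rfl
  exact_mod_cast this

theorem prime_dvd_card_of_spectral (p m : ℕ) (hp : p.Prime) (hm : 1 ≤ m)
    (A : Set (ZMod (p ^ m) × ZMod (p ^ m)))
    (hspec : ∃ S, IsSympSpectralPair A S) (hA : 1 < Nat.card A) :
    p ∣ Nat.card A := by
  obtain ⟨S, hcard, hzero⟩ := hspec
  rw [Nat.card_coe_set_eq] at hA ⊢
  rw [Nat.card_coe_set_eq, Nat.card_coe_set_eq] at hcard
  have hAfin : A.Finite := Set.finite_of_ncard_ne_zero (by omega)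
  have hSfin : S.Finite := Set.finite_of_ncard_ne_zero (by omega)
  have hS2 : 1 < S.ncard := hcard ▸ hA
  obtain ⟨s, hs, s', hs', hne⟩ := (Set.one_lt_ncard hSfin).mp hS2
  have h0 : symFT A (s - s') = 0 := hzero s hs s' hs' hne
  have hsum : ∑ a ∈ hAfin.toFinset, charVal (p ^ m) (sympForm a (s - s')) = 0 := by
    rw [← finsum_mem_eq_finite_toFinset_sum _ hAfin]
    exact h0
  have := key_vanishing p m hp hm hAfin.toFinset (s - s') hsum
  rwa [Set.ncard_eq_toFinset_card _ hAfin]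
end

section
/- If A is a tile of Z_{p^m} × Z_{p^m} with |A| = p^{2m-1}, then A is a symplectic spectral set. -/
open Complex
open scoped Classical

lemma TCPS.pow_mod {M : Type*} [Monoid M] {ω : M} {n : ℕ} (h1 : ω ^ n = 1) (k : ℕ) :
    ω ^ (k % n) = ω ^ k := by
  conv_rhs => rw [← Nat.mod_add_div k n]
  rw [pow_add, pow_mul, h1, one_pow, mul_one]

lemma TCPS.charVal_eq (n : ℕ) (t : ZMod n) :
    charVal n t = Complex.exp (2 * Real.pi * Complex.I / n) ^ t.val := by
  rw [charVal, ← Complex.exp_nat_mul]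
  congr 1
  ring

lemma TCPS.charVal_add (n : ℕ) [NeZero n] (a b : ZMod n) :
    charVal n (a + b) = charVal n a * charVal n b := by
  have h1 : Complex.exp (2 * Real.pi * Complex.I / n) ^ n = 1 :=
    (Complex.isPrimitiveRoot_exp n (NeZero.ne n)).pow_eq_one
  rw [TCPS.charVal_eq, TCPS.charVal_eq, TCPS.charVal_eq, ZMod.val_add,
    TCPS.pow_mod h1, pow_add]

lemma TCPS.charVal_ne_one (n : ℕ) [NeZero n] {t : ZMod n} (ht : t ≠ 0) :
    charVal n t ≠ 1 := by
  intro h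
  rw [charVal, Complex.exp_eq_one_iff] at h
  obtain ⟨k, hk⟩ := h
  have hn : (n : ℂ) ≠ 0 := Nat.cast_ne_zero.mpr (NeZero.ne n)
  have h2 : (2 : ℂ) * Real.pi * Complex.I ≠ 0 := by
    simp [Real.pi_ne_zero, Complex.I_ne_zero]
  have h3 : (2 * Real.pi * Complex.I) * (t.val : ℂ) =
      (2 * Real.pi * Complex.I) * ((k : ℂ) * n) := by
    rw [div_eq_iff hn] at hk
    linear_combination hk
  have h4 := mul_left_cancel₀ h2 h3
  have h5 : (t.val : ℤ) = k * n := by exact_mod_cast h4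
  have h6 : (n : ℤ) ∣ (t.val : ℤ) := ⟨k, by linarith⟩
  have h7 : n ∣ t.val := by exact_mod_cast h6
  have h8 := Nat.eq_zero_of_dvd_of_lt h7 t.val_lt
  exact ht (by rwa [ZMod.val_eq_zero] at h8)

lemma TCPS.sum_char_eq_zero (n : ℕ) [NeZero n] {ξ : ZMod n × ZMod n} (hξ : ξ ≠ 0) :
    ∑ g : ZMod n × ZMod n, charVal n (sympForm g ξ) = 0 := by
  obtain ⟨g₀, hg₀⟩ : ∃ g₀ : ZMod n × ZMod n, sympForm g₀ ξ ≠ 0 := by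
    by_cases h1 : ξ.1 ≠ 0
    · exact ⟨(0, 1), by simpa [sympForm] using h1⟩
    · push_neg at h1
      have h2 : ξ.2 ≠ 0 := fun h => hξ (Prod.ext h1 h)
      exact ⟨(1, 0), by simpa [sympForm] using h2⟩
  have key : ∀ g : ZMod n × ZMod n, charVal n (sympForm (g + g₀) ξ) =
      charVal n (sympForm g ξ) * charVal n (sympForm g₀ ξ) := by
    intro g
    rw [← TCPS.charVal_add]
    congr 1
    simp only [sympForm, Prod.fst_add, Prod.snd_add]
    ring
  have h5 : ∑ g : ZMod n × ZMod n, charVal n (sympForm g ξ) =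
      (∑ g : ZMod n × ZMod n, charVal n (sympForm g ξ)) * charVal n (sympForm g₀ ξ) := by
    conv_lhs => rw [← Equiv.sum_comp (Equiv.addRight g₀)
      (fun g => charVal n (sympForm g ξ))]
    simp only [Equiv.coe_addRight, key]
    rw [← Finset.sum_mul]
  have h6 : (∑ g : ZMod n × ZMod n, charVal n (sympForm g ξ)) *
      (charVal n (sympForm g₀ ξ) - 1) = 0 := by
    rw [mul_sub, ← h5, mul_one, sub_self]
  rcases mul_eq_zero.mp h6 with h | h
  · exact h
  · exact absurd (by linear_combination h : charVal n (sympForm g₀ ξ) = 1)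
      (TCPS.charVal_ne_one n hg₀)

lemma TCPS.eq_of_dvd (p m' : ℕ) (hp : p.Prime) {a b : ZMod (p ^ (m' + 1))}
    (ha : a.val < p ^ m') (hb : b.val < p ^ m')
    (hdvd : ((p ^ m' : ℕ) : ZMod (p ^ (m' + 1))) ∣ a - b) : a = b := by
  haveI : NeZero (p ^ (m' + 1)) := ⟨pow_ne_zero _ hp.pos.ne'⟩
  haveI : NeZero (p ^ m') := ⟨pow_ne_zero _ hp.pos.ne'⟩
  obtain ⟨x, hx⟩ := hdvd
  set π := ZMod.castHom (pow_dvd_pow p (Nat.le_succ m')) (ZMod (p ^ m')) with hπ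
  have hval : ∀ y : ZMod (p ^ (m' + 1)), y.val < p ^ m' → (π y).val = y.val := by
    intro y hy
    have h1 : y = ((y.val : ℕ) : ZMod (p ^ (m' + 1))) := by
      rw [ZMod.natCast_val, ZMod.cast_id]
    rw [h1, map_natCast, ZMod.val_cast_of_lt hy, ZMod.val_cast_of_lt y.val_lt]
  have hmap : π (a - b) = 0 := by
    rw [hx, map_mul, map_natCast, ZMod.natCast_self, zero_mul]
  rw [map_sub, sub_eq_zero] at hmap
  have : a.val = b.val := by rw [← hval a ha, ← hval b hb, hmap]
  exact ZMod.val_injective _ this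

lemma TCPS.vanishing (p m' : ℕ) (hp : p.Prime) [NeZero (p ^ (m' + 1))] (c : ZMod (p ^ (m' + 1)) → ℕ)
    (hsum : ∑ e : ZMod (p ^ (m' + 1)), c e = p)
    (hzero : ∑ e : ZMod (p ^ (m' + 1)), (c e : ℂ) * charVal (p ^ (m' + 1)) e = 0) :
    (∀ e, c e ≤ 1) ∧
    (∀ e e', c e ≠ 0 → c e' ≠ 0 → e.val % p ^ m' = e'.val % p ^ m') := by
  have hq0 : 0 < p ^ m' := pow_pos hp.pos _
  have hn0 : 0 < p ^ (m' + 1) := pow_pos hp.pos _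
  have hqn : p ^ m' * p = p ^ (m' + 1) := (pow_succ p m').symm
  have hqltn : p ^ m' < p ^ (m' + 1) :=
    Nat.pow_lt_pow_right hp.one_lt (Nat.lt_succ_self m')
  set ω : ℂ := Complex.exp (2 * Real.pi * Complex.I / (p ^ (m' + 1) : ℕ)) with hw
  have hω : IsPrimitiveRoot ω (p ^ (m' + 1)) :=
    Complex.isPrimitiveRoot_exp _ (NeZero.ne _)
  set P : Polynomial ℚ :=
    ∑ e : ZMod (p ^ (m' + 1)), Polynomial.C (c e : ℚ) * Polynomial.X ^ e.val with hP
  have hPco : ∀ k : ℕ, k < p ^ (m' + 1) → P.coeff k = (c ((k : ZMod (p ^ (m' + 1)))) : ℚ) := by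
    intro k hk
    rw [hP, Polynomial.finset_sum_coeff]
    simp only [Polynomial.coeff_C_mul, Polynomial.coeff_X_pow]
    rw [Finset.sum_eq_single ((k : ZMod (p ^ (m' + 1))))]
    · simp [ZMod.val_cast_of_lt hk]
    · intro e _ hne
      have : e.val ≠ k := by
        intro h
        apply hne
        rw [← h, ZMod.natCast_val, ZMod.cast_id]
      simp [this, Ne.symm this]
    · simp
  have hPω : Polynomial.aeval ω P = 0 := by
    rw [hP, map_sum]
    have h1 : ∀ e : ZMod (p ^ (m' + 1)),
        Polynomial.aeval ω (Polynomial.C (c e : ℚ) * Polynomial.X ^ e.val)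
          = (c e : ℂ) * charVal (p ^ (m' + 1)) e := by
      intro e
      rw [map_mul, map_pow, Polynomial.aeval_C, Polynomial.aeval_X,
        TCPS.charVal_eq, ← hw, map_natCast]
    rw [Finset.sum_congr rfl fun e _ => h1 e, hzero]
  have hdvd : Polynomial.cyclotomic (p ^ (m' + 1)) ℚ ∣ P := by
    rw [Polynomial.cyclotomic_eq_minpoly_rat hω hn0]
    exact minpoly.dvd ℚ ω hPω
  obtain ⟨Q, hPQ⟩ := hdvd
  have hPne : P ≠ 0 := by
    intro h
    have hzero' : ∀ e : ZMod (p ^ (m' + 1)), c e = 0 := by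
      intro e
      have h2 := hPco e.val e.val_lt
      rw [h, Polynomial.coeff_zero, ZMod.natCast_val, ZMod.cast_id] at h2
      exact_mod_cast h2.symm
    rw [Finset.sum_congr rfl fun e _ => hzero' e] at hsum
    simp at hsum
    have := hp.two_le
    omega
  have hdegP : P.natDegree ≤ p ^ (m' + 1) - 1 := by
    rw [hP]
    apply Polynomial.natDegree_sum_le_of_forall_le
    intro e _
    refine le_trans (Polynomial.natDegree_C_mul_X_pow_le _ _) ?_
    have := e.val_lt
    omega
  have hΦq : (Polynomial.cyclotomic (p ^ (m' + 1)) ℚ).natDegree + p ^ m' = p ^ (m' + 1) := by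
    rw [Polynomial.natDegree_cyclotomic, Nat.totient_prime_pow hp (Nat.succ_pos m')]
    rw [Nat.succ_sub_one]
    have h2 : p ^ m' ≤ p ^ m' * p := by
      simpa using Nat.mul_le_mul_left (p ^ m') hp.pos
    rw [Nat.mul_sub, mul_one, ← hqn]
    omega
  have hQdeg : ∀ j, p ^ m' ≤ j → Q.coeff j = 0 := by
    intro j hj
    apply Polynomial.coeff_eq_zero_of_natDegree_lt
    have hQne : Q ≠ 0 := by
      rintro rfl
      rw [mul_zero] at hPQ
      exact hPne hPQ
    have hmul := Polynomial.natDegree_mul (Polynomial.cyclotomic_ne_zero (p ^ (m' + 1)) ℚ) hQne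
    rw [← hPQ] at hmul
    have hle : (Polynomial.cyclotomic (p ^ (m' + 1)) ℚ).natDegree + Q.natDegree
        ≤ p ^ (m' + 1) - 1 := hmul ▸ hdegP
    omega
  have hcoeff : ∀ r s : ℕ, r < p ^ m' → s < p → P.coeff (r + p ^ m' * s) = Q.coeff r := by
    intro r s hr hs
    rw [hPQ, Polynomial.cyclotomic_prime_pow_eq_geom_sum hp, Finset.sum_mul,
      Polynomial.finset_sum_coeff]
    have h1 : ∀ i ∈ Finset.range p,
        ((Polynomial.X ^ p ^ m') ^ i * Q).coeff (r + p ^ m' * s)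
          = if i = s then Q.coeff r else 0 := by
      intro i hi
      rw [← pow_mul, mul_comm ((Polynomial.X : Polynomial ℚ) ^ (p ^ m' * i)) Q,
        Polynomial.coeff_mul_X_pow']
      rcases lt_trichotomy i s with h | h | h
      · have hle : p ^ m' * i ≤ r + p ^ m' * s := by
          have := Nat.mul_le_mul_left (p ^ m') (Nat.le_of_lt h)
          omega
        rw [if_pos hle, if_neg (Nat.ne_of_lt h), hQdeg]
        have h2 : p ^ m' * i + p ^ m' ≤ p ^ m' * s := by
          have := Nat.mul_le_mul_left (p ^ m') (Nat.succ_le_of_lt h)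
          rw [Nat.mul_succ] at this
          omega
        omega
      · subst h
        rw [if_pos (by omega), if_pos rfl]
        congr 1
        omega
      · have hlt : r + p ^ m' * s < p ^ m' * i := by
          have := Nat.mul_le_mul_left (p ^ m') (Nat.succ_le_of_lt h)
          rw [Nat.mul_succ] at this
          omega
        rw [if_neg (by omega), if_neg (Nat.ne_of_gt h)]
    rw [Finset.sum_congr rfl h1, Finset.sum_ite_eq' (Finset.range p) s (fun _ => Q.coeff r),
      if_pos (Finset.mem_range.mpr hs)]
  have hc : ∀ e : ZMod (p ^ (m' + 1)), (c e : ℚ) = Q.coeff (e.val % p ^ m') := by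
    intro e
    have h1 : e.val % p ^ m' + p ^ m' * (e.val / p ^ m') = e.val := Nat.mod_add_div _ _
    have hlt : e.val / p ^ m' < p := Nat.div_lt_of_lt_mul (by rw [hqn]; exact e.val_lt)
    have h2 : (c e : ℚ) = P.coeff e.val := by
      rw [hPco e.val e.val_lt, ZMod.natCast_val, ZMod.cast_id]
    have h3 : P.coeff e.val = Q.coeff (e.val % p ^ m') := by
      conv_lhs => rw [← h1]
      exact hcoeff _ _ (Nat.mod_lt _ hq0) hlt
    rw [h2, h3]
  -- c only depends on val % p^m'
  have hc' : ∀ e : ZMod (p ^ (m' + 1)), c e = c (((e.val % p ^ m' : ℕ) : ZMod (p ^ (m' + 1)))) := by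
    intro e
    have h1 : ((((e.val % p ^ m' : ℕ) : ZMod (p ^ (m' + 1)))).val) % p ^ m'
        = e.val % p ^ m' := by
      rw [ZMod.val_cast_of_lt (lt_trans (Nat.mod_lt _ hq0) hqltn), Nat.mod_mod_of_dvd]
      exact dvd_refl _
    have := hc e
    rw [← h1, ← hc _] at this
    exact_mod_cast this
  -- sum over range
  have hsum2 : ∑ k ∈ Finset.range (p ^ (m' + 1)), c ((k : ZMod (p ^ (m' + 1)))) = p := by
    calc ∑ k ∈ Finset.range (p ^ (m' + 1)), c ((k : ZMod (p ^ (m' + 1))))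
        = ∑ e : ZMod (p ^ (m' + 1)), c e := by
          exact Finset.sum_nbij' (fun k => ((k : ZMod (p ^ (m' + 1))))) (fun e => e.val)
            (fun k _ => Finset.mem_univ _)
            (fun e _ => Finset.mem_range.mpr e.val_lt)
            (fun k hk => ZMod.val_cast_of_lt (Finset.mem_range.mp hk))
            (fun e _ => ZMod.natCast_rightInverse e)
            (fun k _ => rfl)
      _ = p := hsum
  have hmodc : ∀ k : ℕ, c ((k : ZMod (p ^ (m' + 1))))
      = c (((k % p ^ m' : ℕ) : ZMod (p ^ (m' + 1)))) := by
    intro k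
    rw [hc' ((k : ZMod (p ^ (m' + 1)))), ZMod.val_natCast,
      Nat.mod_mod_of_dvd _ (pow_dvd_pow p (Nat.le_succ m'))]
  have hsplit : ∑ k ∈ Finset.range (p ^ (m' + 1)), c ((k : ZMod (p ^ (m' + 1))))
      = ∑ x ∈ Finset.range (p ^ m') ×ˢ Finset.range p,
          c ((x.1 : ZMod (p ^ (m' + 1)))) := by
    rw [Finset.sum_congr rfl (fun k _ => hmodc k)]
    exact Finset.sum_nbij' (fun k => (k % p ^ m', k / p ^ m')) (fun x => x.1 + p ^ m' * x.2)
      (fun k hk => by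
        rw [Finset.mem_product]
        refine ⟨Finset.mem_range.mpr (Nat.mod_lt _ hq0),
          Finset.mem_range.mpr (Nat.div_lt_of_lt_mul ?_)⟩
        rw [hqn]
        exact Finset.mem_range.mp hk)
      (fun x hx => by
        rw [Finset.mem_product] at hx
        rw [Finset.mem_range]
        have h1 := Finset.mem_range.mp hx.1
        have h2 := Nat.mul_le_mul_left (p ^ m') (Nat.succ_le_of_lt (Finset.mem_range.mp hx.2))
        rw [Nat.mul_succ] at h2
        show x.1 + p ^ m' * x.2 < p ^ (m' + 1)
        omega)
      (fun k _ => Nat.mod_add_div _ _)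
      (fun x hx => by
        rw [Finset.mem_product] at hx
        have h1 := Finset.mem_range.mp hx.1
        have h2 := Finset.mem_range.mp hx.2
        ext
        · show (x.1 + p ^ m' * x.2) % p ^ m' = x.1
          rw [Nat.add_mul_mod_self_left, Nat.mod_eq_of_lt h1]
        · show (x.1 + p ^ m' * x.2) / p ^ m' = x.2
          rw [Nat.add_mul_div_left _ _ hq0, Nat.div_eq_of_lt h1, zero_add])
      (fun k _ => rfl)
  have hone : ∑ a ∈ Finset.range (p ^ m'), c ((a : ZMod (p ^ (m' + 1)))) = 1 := by
    apply Nat.eq_of_mul_eq_mul_left hp.pos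
    rw [mul_one, Finset.mul_sum]
    calc ∑ a ∈ Finset.range (p ^ m'), p * c ((a : ZMod (p ^ (m' + 1))))
        = ∑ a ∈ Finset.range (p ^ m'), ∑ _b ∈ Finset.range p, c ((a : ZMod (p ^ (m' + 1)))) := by
          apply Finset.sum_congr rfl
          intro a _
          rw [Finset.sum_const, Finset.card_range, smul_eq_mul]
      _ = ∑ x ∈ Finset.range (p ^ m') ×ˢ Finset.range p, c ((x.1 : ZMod (p ^ (m' + 1)))) :=
          (Finset.sum_product (Finset.range (p ^ m')) (Finset.range p)
            (fun x => c ((x.1 : ZMod (p ^ (m' + 1)))))).symm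
      _ = ∑ k ∈ Finset.range (p ^ (m' + 1)), c ((k : ZMod (p ^ (m' + 1)))) := hsplit.symm
      _ = p := hsum2
  obtain ⟨r₀, hr₀mem, hr₀ne⟩ := Finset.exists_ne_zero_of_sum_ne_zero
    (s := Finset.range (p ^ m')) (f := fun a => c ((a : ZMod (p ^ (m' + 1)))))
    (by rw [hone]; exact one_ne_zero)
  have hsplit2 : c ((r₀ : ZMod (p ^ (m' + 1))))
      + ∑ a ∈ (Finset.range (p ^ m')).erase r₀, c ((a : ZMod (p ^ (m' + 1)))) = 1 := by
    exact (Finset.add_sum_erase _ (fun a : ℕ => c ((a : ZMod (p ^ (m' + 1))))) hr₀mem).trans hone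
  have hrest : ∀ a ∈ (Finset.range (p ^ m')).erase r₀, c ((a : ZMod (p ^ (m' + 1)))) = 0 := by
    have h0 : ∑ a ∈ (Finset.range (p ^ m')).erase r₀, c ((a : ZMod (p ^ (m' + 1)))) = 0 := by
      omega
    intro a ha
    exact (Finset.sum_eq_zero_iff.mp h0) a ha
  have hval : ∀ a : ℕ, a < p ^ m' → a ≠ r₀ → c ((a : ZMod (p ^ (m' + 1)))) = 0 := by
    intro a ha hne
    exact hrest a (Finset.mem_erase.mpr ⟨hne, Finset.mem_range.mpr ha⟩)
  constructor
  · intro e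
    rw [hc' e]
    by_cases h : e.val % p ^ m' = r₀
    · rw [h]; omega
    · rw [hval _ (Nat.mod_lt _ hq0) h]
      omega
  · intro e e' he he'
    rw [hc' e] at he
    rw [hc' e'] at he'
    by_contra hne
    rcases ne_or_eq (e.val % p ^ m') r₀ with h | h
    · exact he (hval _ (Nat.mod_lt _ hq0) h)
    · rcases ne_or_eq (e'.val % p ^ m') r₀ with h' | h'
      · exact he' (hval _ (Nat.mod_lt _ hq0) h')
      · exact hne (h.trans h'.symm)

lemma TCPS.card_S (p m' : ℕ) (hp : p.Prime)
    (d : ZMod (p ^ (m' + 1)) × ZMod (p ^ (m' + 1))) (hd : d ≠ 0) :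
    Nat.card {s : ZMod (p ^ (m' + 1)) × ZMod (p ^ (m' + 1)) |
      (sympForm d s).val < p ^ m'} = p ^ (2 * m' + 1) := by
  haveI : NeZero (p ^ (m' + 1)) := ⟨pow_ne_zero _ hp.pos.ne'⟩
  have hq0 : 0 < p ^ m' := pow_pos hp.pos _
  have hqn : p ^ m' * p = p ^ (m' + 1) := (pow_succ p m').symm
  have hqltn : p ^ m' < p ^ (m' + 1) :=
    Nat.pow_lt_pow_right hp.one_lt (Nat.lt_succ_self m')
  set g : (ZMod (p ^ (m' + 1)) × ZMod (p ^ (m' + 1))) →+ ZMod (p ^ (m' + 1)) :=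
    { toFun := fun s => sympForm d s
      map_zero' := by simp [sympForm]
      map_add' := by
        intro s t
        simp only [sympForm, Prod.fst_add, Prod.snd_add]
        ring } with hg
  have hgapp : ∀ s, g s = sympForm d s := fun _ => rfl
  -- scalar closure of the range
  have hscal : ∀ x ∈ g.range, ∀ r : ZMod (p ^ (m' + 1)), r * x ∈ g.range := by
    rintro x ⟨s, rfl⟩ r
    refine ⟨(r * s.1, r * s.2), ?_⟩
    simp only [hgapp, sympForm]
    ring
  -- q := p^m' is in the range
  have hqC : ((p ^ m' : ℕ) : ZMod (p ^ (m' + 1))) ∈ g.range := by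
    obtain ⟨x, hxC, hx0⟩ : ∃ x ∈ g.range, x ≠ 0 := by
      by_cases h1 : d.1 ≠ 0
      · exact ⟨d.1, ⟨(0, 1), by simp [hgapp, sympForm]⟩, h1⟩
      · push_neg at h1
        have h2 : d.2 ≠ 0 := fun h => hd (Prod.ext h1 h)
        exact ⟨d.2, ⟨(-1, 0), by simp [hgapp, sympForm]⟩, h2⟩
    have hv0 : x.val ≠ 0 := by
      simpa [ZMod.val_eq_zero] using hx0
    set t := (x.val).factorization p with ht
    have hpt : p ^ t ∣ x.val := Nat.ordProj_dvd _ p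
    have hvu : p ^ t * (x.val / p ^ t) = x.val := Nat.ordProj_mul_ordCompl_eq_self _ p
    have hpu : ¬ p ∣ (x.val / p ^ t) := Nat.not_dvd_ordCompl hp hv0
    have htm : t ≤ m' := by
      by_contra hgt
      push_neg at hgt
      have h3 : p ^ (m' + 1) ∣ x.val := dvd_trans (pow_dvd_pow p hgt) hpt
      have h4 := Nat.le_of_dvd (Nat.pos_of_ne_zero hv0) h3
      have h5 := x.val_lt
      omega
    have hx : x = ((x.val : ℕ) : ZMod (p ^ (m' + 1))) := (ZMod.natCast_rightInverse x).symm
    have h3 : ((p ^ (m' - t) : ℕ) : ZMod (p ^ (m' + 1))) * x ∈ g.range :=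
      hscal x hxC _
    have h4 : ((p ^ (m' - t) : ℕ) : ZMod (p ^ (m' + 1))) * x
        = ((p ^ (m' - t) * x.val : ℕ) : ZMod (p ^ (m' + 1))) := by
      conv_lhs => rw [hx]
      rw [← Nat.cast_mul]
    have h4b : p ^ (m' - t) * x.val = p ^ m' * (x.val / p ^ t) := by
      conv_lhs => rw [← hvu]
      rw [← mul_assoc, ← pow_add]
      congr 2
      omega
    rw [h4, h4b] at h3
    have hcop : Nat.Coprime (x.val / p ^ t) (p ^ (m' + 1)) :=
      Nat.Coprime.pow_right _ ((hp.coprime_iff_not_dvd.mpr hpu).symm)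
    set w : (ZMod (p ^ (m' + 1)))ˣ := ZMod.unitOfCoprime _ hcop with hwdef
    have h5 := hscal _ h3 ((w⁻¹ : (ZMod (p ^ (m' + 1)))ˣ) : ZMod (p ^ (m' + 1)))
    have h6 : ((w⁻¹ : (ZMod (p ^ (m' + 1)))ˣ) : ZMod (p ^ (m' + 1)))
        * ((p ^ m' * (x.val / p ^ t) : ℕ) : ZMod (p ^ (m' + 1)))
        = ((p ^ m' : ℕ) : ZMod (p ^ (m' + 1))) := by
      rw [Nat.cast_mul]
      have hw : ((w : (ZMod (p ^ (m' + 1)))ˣ) : ZMod (p ^ (m' + 1)))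
          = ((x.val / p ^ t : ℕ) : ZMod (p ^ (m' + 1))) := rfl
      rw [← hw]
      calc ((w⁻¹ : (ZMod (p ^ (m' + 1)))ˣ) : ZMod (p ^ (m' + 1)))
            * (((p ^ m' : ℕ) : ZMod (p ^ (m' + 1))) * (w : ZMod (p ^ (m' + 1))))
          = ((p ^ m' : ℕ) : ZMod (p ^ (m' + 1)))
            * (((w⁻¹ : (ZMod (p ^ (m' + 1)))ˣ) : ZMod (p ^ (m' + 1)))
              * (w : ZMod (p ^ (m' + 1)))) := by ring
        _ = ((p ^ m' : ℕ) : ZMod (p ^ (m' + 1))) := by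
            rw [← Units.val_mul, inv_mul_cancel, Units.val_one, mul_one]
    rw [h6] at h5
    exact h5
  set W : Set (ZMod (p ^ (m' + 1))) :=
    {x | x ∈ g.range ∧ x.val < p ^ m'} with hW
  have hWmem : ∀ x : ZMod (p ^ (m' + 1)), x ∈ W ↔ x ∈ g.range ∧ x.val < p ^ m' := by
    intro x; rfl
  have hvadd : ∀ w : ZMod (p ^ (m' + 1)), w.val < p ^ m' → ∀ j : ℕ, j < p →
      (w + ((p ^ m' * j : ℕ) : ZMod (p ^ (m' + 1)))).val = w.val + p ^ m' * j := by
    intro w hw j hj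
    have h1 : p ^ m' * j + p ^ m' ≤ p ^ m' * p := by
      have := Nat.mul_le_mul_left (p ^ m') (Nat.succ_le_of_lt hj)
      rw [Nat.mul_succ] at this
      omega
    rw [ZMod.val_add, ZMod.val_natCast, Nat.mod_eq_of_lt (by omega : p ^ m' * j < p ^ (m' + 1)),
      Nat.mod_eq_of_lt (by omega : w.val + p ^ m' * j < p ^ (m' + 1))]
  have hmulmem : ∀ j : ℕ, ((p ^ m' * j : ℕ) : ZMod (p ^ (m' + 1))) ∈ g.range := by
    intro j
    rw [Nat.cast_mul]
    rw [mul_comm]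
    exact hscal _ hqC _
  -- bijection 1 : W × Fin p ≃ g.range
  have hb1 : Function.Bijective (fun x : W × Fin p =>
      (⟨x.1.1 + ((p ^ m' * x.2.1 : ℕ) : ZMod (p ^ (m' + 1))),
        AddSubgroup.add_mem _ x.1.2.1 (hmulmem x.2.1)⟩ : g.range)) := by
    constructor
    · rintro ⟨w, j⟩ ⟨w', j'⟩ h
      have h0 : w.1 + ((p ^ m' * j.1 : ℕ) : ZMod (p ^ (m' + 1)))
          = w'.1 + ((p ^ m' * j'.1 : ℕ) : ZMod (p ^ (m' + 1))) := congrArg Subtype.val h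
      have hv := congrArg ZMod.val h0
      rw [hvadd w.1 w.2.2 j.1 j.2, hvadd w'.1 w'.2.2 j'.1 j'.2] at hv
      have e1 : w.1.val = w'.1.val := by
        have h1 : w.1.val % p ^ m' = w'.1.val % p ^ m' := by
          rw [← Nat.add_mul_mod_self_left w.1.val (p ^ m') j.1,
            ← Nat.add_mul_mod_self_left w'.1.val (p ^ m') j'.1, hv]
        rwa [Nat.mod_eq_of_lt w.2.2, Nat.mod_eq_of_lt w'.2.2] at h1
      have e2 : j.1 = j'.1 := Nat.eq_of_mul_eq_mul_left hq0 (by omega)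
      exact Prod.ext (Subtype.ext (ZMod.val_injective _ e1)) (Fin.ext e2)
    · rintro ⟨y, hy⟩
      have hyl : y.val < p ^ m' * p := by rw [hqn]; exact y.val_lt
      have hj : y.val / p ^ m' < p := Nat.div_lt_of_lt_mul hyl
      set jv := y.val / p ^ m' with hjv
      set rv := y.val % p ^ m' with hrv
      have e3 : rv + p ^ m' * jv = y.val := Nat.mod_add_div _ _
      have e4 : y = ((rv + p ^ m' * jv : ℕ) : ZMod (p ^ (m' + 1))) := by
        rw [e3]
        exact (ZMod.natCast_rightInverse y).symm
      have e2 : y - ((p ^ m' * jv : ℕ) : ZMod (p ^ (m' + 1)))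
          = ((rv : ℕ) : ZMod (p ^ (m' + 1))) := by
        conv_lhs => rw [e4]
        rw [Nat.cast_add, add_sub_cancel_right]
      refine ⟨⟨⟨y - ((p ^ m' * jv : ℕ) : ZMod (p ^ (m' + 1))), ?_, ?_⟩,
        ⟨jv, hj⟩⟩, ?_⟩
      · exact AddSubgroup.sub_mem _ hy (hmulmem _)
      · rw [e2, ZMod.val_cast_of_lt (lt_trans (Nat.mod_lt _ hq0) hqltn)]
        exact Nat.mod_lt _ hq0
      · apply Subtype.ext
        show (y - _) + _ = y
        exact sub_add_cancel y _
  -- section of g on W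
  let sec : W → (ZMod (p ^ (m' + 1)) × ZMod (p ^ (m' + 1))) :=
    fun w => Classical.choose (AddMonoidHom.mem_range.mp w.2.1)
  have hsecp : ∀ w : W, g (sec w) = w.1 :=
    fun w => Classical.choose_spec (AddMonoidHom.mem_range.mp w.2.1)
  set S : Set (ZMod (p ^ (m' + 1)) × ZMod (p ^ (m' + 1))) :=
    {s | (sympForm d s).val < p ^ m'} with hS
  have hSmem : ∀ s, s ∈ S ↔ (g s).val < p ^ m' := fun s => Iff.rfl
  -- bijection 2 : W × ker ≃ S
  have hmem2 : ∀ x : W × g.ker, sec x.1 + x.2.1 ∈ S := by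
    intro x
    rw [hSmem, map_add, hsecp, AddMonoidHom.mem_ker.mp x.2.2, add_zero]
    exact x.1.2.2
  have hb2 : Function.Bijective (fun x : W × g.ker =>
      (⟨sec x.1 + x.2.1, hmem2 x⟩ : S)) := by
    constructor
    · rintro ⟨w, k⟩ ⟨w', k'⟩ h
      have h0 : sec w + k.1 = sec w' + k'.1 := congrArg Subtype.val h
      have h1 : w.1 = w'.1 := by
        have h2 := congrArg g h0
        rwa [map_add, map_add, hsecp, hsecp, AddMonoidHom.mem_ker.mp k.2,
          AddMonoidHom.mem_ker.mp k'.2, add_zero, add_zero] at h2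
      have h3 : w = w' := Subtype.ext h1
      subst h3
      have h4 : k.1 = k'.1 := by exact add_left_cancel h0
      exact Prod.ext rfl (Subtype.ext h4)
    · rintro ⟨s, hs⟩
      have hgs : g s ∈ W := ⟨⟨s, rfl⟩, (hSmem s).mp hs⟩
      have hker : s - sec ⟨g s, hgs⟩ ∈ g.ker := by
        rw [AddMonoidHom.mem_ker, map_sub, hsecp, sub_self]
      refine ⟨⟨⟨g s, hgs⟩, ⟨s - sec ⟨g s, hgs⟩, hker⟩⟩, ?_⟩
      apply Subtype.ext
      show sec _ + (s - sec _) = s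
      exact add_sub_cancel _ s
  -- cardinalities
  have hc1 : Nat.card W * p = Nat.card g.range := by
    have := Nat.card_eq_of_bijective _ hb1
    rwa [Nat.card_prod, Nat.card_eq_fintype_card (α := Fin p), Fintype.card_fin] at this
  have hc2 : Nat.card S = Nat.card W * Nat.card g.ker := by
    have := Nat.card_eq_of_bijective _ hb2
    rw [Nat.card_prod] at this
    exact this.symm
  have hc3 : Nat.card (ZMod (p ^ (m' + 1)) × ZMod (p ^ (m' + 1)))
      = Nat.card g.range * Nat.card g.ker := by
    rw [AddSubgroup.card_eq_card_quotient_mul_card_addSubgroup g.ker]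
    congr 1
    exact Nat.card_congr (QuotientAddGroup.quotientKerEquivRange g).toEquiv
  have hc4 : Nat.card (ZMod (p ^ (m' + 1)) × ZMod (p ^ (m' + 1))) = p ^ (2 * m' + 1) * p := by
    rw [Nat.card_prod, Nat.card_zmod, ← pow_add, ← pow_succ]
    congr 1
    omega
  have hc5 : Nat.card S * p = p ^ (2 * m' + 1) * p := by
    rw [hc2]
    calc Nat.card W * Nat.card g.ker * p
        = Nat.card W * p * Nat.card g.ker := by ring
      _ = Nat.card g.range * Nat.card g.ker := by rw [hc1]
      _ = p ^ (2 * m' + 1) * p := by rw [← hc3, hc4]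
  exact Nat.eq_of_mul_eq_mul_right hp.pos hc5

theorem tile_card_p_pow_is_spectral (p m : ℕ) (hp : p.Prime) (hm : 1 ≤ m)
    (A : Set (ZMod (p ^ m) × ZMod (p ^ m))) (hcard : Nat.card A = p ^ (2 * m - 1))
    (htile : ∃ B, IsTilingPair A B) :
    ∃ S, IsSympSpectralPair A S := by
  obtain ⟨m', rfl⟩ : ∃ m', m = m' + 1 := ⟨m - 1, by omega⟩
  haveI : NeZero (p ^ (m' + 1)) := ⟨pow_ne_zero _ hp.pos.ne'⟩
  obtain ⟨B, htile⟩ := htile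
  have hbij : Function.Bijective
      (fun x : ↥A × ↥B => (x.1.1 + x.2.1 : ZMod (p ^ (m' + 1)) × ZMod (p ^ (m' + 1)))) := by
    constructor
    · rintro ⟨⟨a, ha⟩, ⟨b, hb⟩⟩ ⟨⟨a', ha'⟩, ⟨b', hb'⟩⟩ h
      simp only at h
      obtain ⟨pr, -, huniq⟩ := htile (a + b)
      have h1 := huniq (a, b) ⟨ha, hb, rfl⟩
      have h2 := huniq (a', b') ⟨ha', hb', h.symm⟩
      have h3 : (a, b) = (a', b') := h1.trans h2.symm
      have ha3 : a = a' := congrArg Prod.fst h3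
      have hb3 : b = b' := congrArg Prod.snd h3
      subst ha3
      subst hb3
      rfl
    · intro gg
      obtain ⟨⟨a, b⟩, ⟨ha, hb, hab⟩, -⟩ := htile gg
      exact ⟨(⟨a, ha⟩, ⟨b, hb⟩), hab⟩
  have hGcard : Nat.card (ZMod (p ^ (m' + 1)) × ZMod (p ^ (m' + 1)))
      = p ^ (2 * m' + 1) * p := by
    rw [Nat.card_prod, Nat.card_zmod, ← pow_add, ← pow_succ]
    congr 1
    omega
  have hA : Nat.card A = p ^ (2 * m' + 1) := by
    have he : 2 * (m' + 1) - 1 = 2 * m' + 1 := by omega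
    rw [hcard, he]
  have hABcard : Nat.card A * Nat.card B = p ^ (2 * m' + 1) * p := by
    calc Nat.card A * Nat.card B = Nat.card (↥A × ↥B) := (Nat.card_prod _ _).symm
      _ = Nat.card (ZMod (p ^ (m' + 1)) × ZMod (p ^ (m' + 1))) :=
          Nat.card_eq_of_bijective _ hbij
      _ = p ^ (2 * m' + 1) * p := hGcard
  have hB : Nat.card B = p := by
    have h0 : (0 : ℕ) < p ^ (2 * m' + 1) := pow_pos hp.pos _
    rw [hA] at hABcard
    exact Nat.eq_of_mul_eq_mul_left h0 hABcard
  have hfin : ∀ (C : Set (ZMod (p ^ (m' + 1)) × ZMod (p ^ (m' + 1))))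
      (ξ : ZMod (p ^ (m' + 1)) × ZMod (p ^ (m' + 1))),
      symFT C ξ = ∑ x ∈ C.toFinset, charVal (p ^ (m' + 1)) (sympForm x ξ) := by
    intro C ξ
    simp only [symFT]
    rw [← finsum_mem_coe_finset, Set.coe_toFinset]
  have hsympadd : ∀ a b ξ : ZMod (p ^ (m' + 1)) × ZMod (p ^ (m' + 1)),
      sympForm (a + b) ξ = sympForm a ξ + sympForm b ξ := by
    intro a b ξ
    simp only [sympForm, Prod.fst_add, Prod.snd_add]
    ring
  have hprod : ∀ ξ : ZMod (p ^ (m' + 1)) × ZMod (p ^ (m' + 1)), ξ ≠ 0 →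
      symFT A ξ * symFT B ξ = 0 := by
    intro ξ hξ
    rw [hfin, hfin, Finset.sum_mul_sum]
    calc ∑ a ∈ A.toFinset, ∑ b ∈ B.toFinset,
          charVal (p ^ (m' + 1)) (sympForm a ξ) * charVal (p ^ (m' + 1)) (sympForm b ξ)
        = ∑ a ∈ A.toFinset, ∑ b ∈ B.toFinset,
            charVal (p ^ (m' + 1)) (sympForm (a + b) ξ) := by
          apply Finset.sum_congr rfl
          intro a _
          apply Finset.sum_congr rfl
          intro b _
          rw [hsympadd, TCPS.charVal_add]
      _ = ∑ x : ↥A × ↥B, charVal (p ^ (m' + 1)) (sympForm (x.1.1 + x.2.1) ξ) := by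
          rw [Fintype.sum_prod_type]
          rw [Finset.sum_subtype A.toFinset (fun x => Set.mem_toFinset)
            (fun a => ∑ b ∈ B.toFinset, charVal (p ^ (m' + 1)) (sympForm (a + b) ξ))]
          apply Finset.sum_congr rfl
          intro a _
          rw [Finset.sum_subtype B.toFinset (fun x => Set.mem_toFinset)
            (fun b => charVal (p ^ (m' + 1)) (sympForm (a.1 + b) ξ))]
      _ = ∑ gg : ZMod (p ^ (m' + 1)) × ZMod (p ^ (m' + 1)),
            charVal (p ^ (m' + 1)) (sympForm gg ξ) :=
          Fintype.sum_bijective _ hbij _ _ (fun x => rfl)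
      _ = 0 := TCPS.sum_char_eq_zero _ hξ
  have hB2 : 1 < B.toFinset.card := by
    have h1 : B.toFinset.card = p := by
      rw [Set.toFinset_card, ← Nat.card_eq_fintype_card, hB]
    have := hp.two_le
    omega
  obtain ⟨b₁, hb₁, b₀, hb₀, hbne⟩ := Finset.one_lt_card.mp hB2
  rw [Set.mem_toFinset] at hb₁ hb₀
  have hdne : b₁ - b₀ ≠ 0 := sub_ne_zero.mpr hbne
  refine ⟨{s | (sympForm (b₁ - b₀) s).val < p ^ m'}, ?_, ?_⟩
  · rw [hA, TCPS.card_S p m' hp (b₁ - b₀) hdne]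
  · intro s hs s' hs' hss
    by_contra hA0
    have hδ : s - s' ≠ 0 := sub_ne_zero.mpr hss
    have hBz : symFT B (s - s') = 0 := by
      rcases mul_eq_zero.mp (hprod _ hδ) with h | h
      · exact absurd h hA0
      · exact h
    set c : ZMod (p ^ (m' + 1)) → ℕ :=
      fun e => (B.toFinset.filter (fun b => sympForm b (s - s') = e)).card with hcdef
    have hcsum : ∑ e : ZMod (p ^ (m' + 1)), c e = p := by
      rw [← Finset.card_eq_sum_card_fiberwise
        (fun x _ => Finset.mem_univ (sympForm x (s - s'))), Set.toFinset_card,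
        ← Nat.card_eq_fintype_card]
      exact hB
    have hczero : ∑ e : ZMod (p ^ (m' + 1)), (c e : ℂ) * charVal (p ^ (m' + 1)) e = 0 := by
      calc ∑ e : ZMod (p ^ (m' + 1)), (c e : ℂ) * charVal (p ^ (m' + 1)) e
          = ∑ e : ZMod (p ^ (m' + 1)),
              ∑ b ∈ B.toFinset.filter (fun b => sympForm b (s - s') = e),
                charVal (p ^ (m' + 1)) (sympForm b (s - s')) := by
            apply Finset.sum_congr rfl
            intro e _
            rw [Finset.sum_congr rfl
              (fun b hb => by rw [(Finset.mem_filter.mp hb).2]),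
              Finset.sum_const, nsmul_eq_mul]
        _ = ∑ b ∈ B.toFinset, charVal (p ^ (m' + 1)) (sympForm b (s - s')) :=
            Finset.sum_fiberwise_of_maps_to (fun x _ => Finset.mem_univ _) _
        _ = symFT B (s - s') := (hfin _ _).symm
        _ = 0 := hBz
    obtain ⟨hle1, hmodeq⟩ := TCPS.vanishing p m' hp c hcsum hczero
    have hmem₁ : b₁ ∈ B.toFinset.filter
        (fun b => sympForm b (s - s') = sympForm b₁ (s - s')) :=
      Finset.mem_filter.mpr ⟨Set.mem_toFinset.mpr hb₁, rfl⟩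
    have hmem₀ : b₀ ∈ B.toFinset.filter
        (fun b => sympForm b (s - s') = sympForm b₀ (s - s')) :=
      Finset.mem_filter.mpr ⟨Set.mem_toFinset.mpr hb₀, rfl⟩
    have hce₁ : c (sympForm b₁ (s - s')) ≠ 0 :=
      (Finset.card_pos.mpr ⟨b₁, hmem₁⟩).ne'
    have hce₀ : c (sympForm b₀ (s - s')) ≠ 0 :=
      (Finset.card_pos.mpr ⟨b₀, hmem₀⟩).ne'
    have hne10 : sympForm b₁ (s - s') ≠ sympForm b₀ (s - s') := by
      intro h
      have hmem₀' : b₀ ∈ B.toFinset.filter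
          (fun b => sympForm b (s - s') = sympForm b₁ (s - s')) :=
        Finset.mem_filter.mpr ⟨Set.mem_toFinset.mpr hb₀, h ▸ rfl⟩
      have h2 : 1 < c (sympForm b₁ (s - s')) :=
        Finset.one_lt_card.mpr ⟨b₁, hmem₁, b₀, hmem₀', hbne⟩
      have := hle1 (sympForm b₁ (s - s'))
      omega
    have hmod := hmodeq _ _ hce₁ hce₀
    have hdvd : ((p ^ m' : ℕ) : ZMod (p ^ (m' + 1)))
        ∣ (sympForm b₁ (s - s') - sympForm b₀ (s - s')) := by
      have hmod' : Nat.ModEq (p ^ m') (sympForm b₁ (s - s')).val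
          (sympForm b₀ (s - s')).val := hmod
      obtain ⟨z, hz⟩ := Nat.ModEq.dvd hmod'
      refine ⟨((-z : ℤ) : ZMod (p ^ (m' + 1))), ?_⟩
      have hcast : sympForm b₁ (s - s') - sympForm b₀ (s - s')
          = ((((sympForm b₁ (s - s')).val : ℤ) - ((sympForm b₀ (s - s')).val : ℤ) : ℤ)
              : ZMod (p ^ (m' + 1))) := by
        push_cast
        rw [ZMod.natCast_rightInverse _, ZMod.natCast_rightInverse _]
      rw [hcast, show (((sympForm b₁ (s - s')).val : ℤ) - ((sympForm b₀ (s - s')).val : ℤ))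
          = ((p ^ m' : ℕ) : ℤ) * (-z) from by linarith [hz]]
      push_cast
      ring
    have hsym : sympForm b₁ (s - s') - sympForm b₀ (s - s')
        = sympForm (b₁ - b₀) s - sympForm (b₁ - b₀) s' := by
      simp only [sympForm, Prod.fst_sub, Prod.snd_sub]
      ring
    rw [hsym] at hdvd
    have heq := TCPS.eq_of_dvd p m' hp hs hs' hdvd
    have hzero2 : sympForm b₁ (s - s') - sympForm b₀ (s - s') = 0 := by
      rw [hsym, heq, sub_self]
    exact hne10 (sub_eq_zero.mp hzero2)
end

section
/- Let p be prime and let (A,B) be a tiling pair in Z_{p^m} × Z_{p^m}. Let E be the set of generators of some cyclic subgroup of Z_{p^m} × Z_{p^m}. If ΔA ∩ E ≠ ∅, then ΔB ∩ E = ∅. -/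
open Complex
open scoped Classical

/-!
Since `d ∈ ΔA` and `e ∈ ΔB` generate the same cyclic subgroup of a `p`-group, `e = q • d` with `q`
prime to `p`, hence to `|A|`. By Tijdeman's dilation theorem `q • A ⊕ B` is again a tiling, and
`e = q • d` would make `q • a + b' = q • a' + b` two different decompositions of one element.
The dilation theorem reduces to a prime `q = r`: in `𝔽_r[G]` the Frobenius gives
`1_A ^ r * 1_B = 1_A ^ (r - 1) * 1_G = |A| ^ (r - 1) • 1_G = 1_G`, so `(a, b) ↦ r • a + b` maps
`A × B` onto `G`, and bijectively by counting.
-/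

open Finset AddMonoidAlgebra

section Tiling

variable {G : Type*} [AddCommGroup G]

theorem ne_zero_of_mem_diffSet {A : Set G} {d : G} (hd : d ∈ diffSet A) : d ≠ 0 := by
  obtain ⟨a, -, a', -, hne, rfl⟩ := hd
  exact sub_ne_zero.2 hne

theorem IsTilingPair.bijOn_add {A B : Set G} (h : IsTilingPair A B) :
    Set.BijOn (fun p : G × G => p.1 + p.2) (A ×ˢ B) Set.univ := by
  refine ⟨fun _ _ => Set.mem_univ _, ?_, fun g _ => ?_⟩
  · rintro ⟨a, b⟩ ⟨ha, hb⟩ ⟨a', b'⟩ ⟨ha', hb'⟩ hsum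
    exact (h _).unique ⟨ha, hb, rfl⟩ ⟨ha', hb', hsum.symm⟩
  · obtain ⟨p, ⟨ha, hb, hsum⟩, -⟩ := h g
    exact ⟨p, ⟨ha, hb⟩, hsum⟩

variable [Fintype G]

theorem IsTilingPair.card_mul_card {A B : Finset G} (h : IsTilingPair (A : Set G) B) :
    #A * #B = Fintype.card G := by
  rw [← card_product, ← card_univ]
  exact card_nbij _ (fun _ _ => mem_univ _) (by simpa using h.bijOn_add.injOn)
    (by simpa using h.bijOn_add.surjOn)

theorem isTilingPair_image_of_surjective [DecidableEq G] {A B : Finset G} (f : G → G)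
    (hcard : #A * #B ≤ Fintype.card G) (hsurj : ∀ g, ∃ a ∈ A, ∃ b ∈ B, f a + b = g) :
    IsTilingPair (A.image f : Set G) B := by
  have hinj : Set.InjOn (fun p : G × G => f p.1 + p.2) (A ×ˢ B : Finset (G × G)) :=
    injOn_of_surjOn_of_card_le _ (fun _ _ => mem_univ _)
      (fun g _ => by simpa [and_assoc] using hsurj g) (by rwa [card_product, card_univ])
  intro g
  obtain ⟨a, ha, b, hb, rfl⟩ := hsurj g
  refine ⟨(f a, b), ⟨by simpa using ⟨a, ha, rfl⟩, hb, rfl⟩, ?_⟩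
  rintro ⟨c, b'⟩ ⟨hc, hb', hsum⟩
  obtain ⟨a', ha', rfl⟩ : ∃ a' ∈ A, f a' = c := by simpa using hc
  have := @hinj (a', b') (by simp [ha', hb']) (a, b) (by simp [ha, hb]) hsum
  simp_all

end Tiling

section GroupRing

variable {R G ι κ : Type*} [CommSemiring R]

theorem exists_eq_of_coeff_sum_single_ne_zero {s : Finset ι} {f : ι → G} {g : G}
    (h : (∑ i ∈ s, single (f i) (1 : R)).coeff g ≠ 0) : ∃ i ∈ s, f i = g := by
  contrapose! h
  simp only [coeff_sum, Finsupp.finsetSum_apply, coeff_single]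
  exact sum_eq_zero fun i hi => Finsupp.single_eq_of_ne (h i hi).symm

theorem sum_single_mul_sum_single [Add G] (s : Finset ι) (t : Finset κ) (f : ι → G) (g : κ → G) :
    (∑ i ∈ s, single (f i) (1 : R)) * ∑ j ∈ t, single (g j) 1 =
      ∑ p ∈ s ×ˢ t, single (f p.1 + g p.2) 1 := by
  simp [sum_mul_sum, sum_product, single_mul_single]

theorem sum_single_mul_sum_univ [AddGroup G] [Fintype G] (s : Finset ι) (f : ι → G) :
    (∑ i ∈ s, single (f i) (1 : R)) * ∑ g : G, single g 1 = #s • ∑ g : G, single g (1 : R) := by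
  rw [sum_mul, ← sum_const]
  refine sum_congr rfl fun i _ => ?_
  rw [mul_sum]
  exact Fintype.sum_equiv (Equiv.addLeft (f i)) _ _ fun g => by simp [single_mul_single]

theorem IsTilingPair.sum_single_add [AddCommGroup G] [Fintype G] {A B : Finset G}
    (h : IsTilingPair (A : Set G) B) :
    ∑ p ∈ A ×ˢ B, single (p.1 + p.2) (1 : R) = ∑ g : G, single g 1 :=
  sum_nbij _ (fun _ _ => mem_univ _) (by simpa using h.bijOn_add.injOn)
    (by simpa using h.bijOn_add.surjOn) fun _ _ => rfl

end GroupRing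

section Tijdeman

variable {G : Type*} [AddCommGroup G] [Fintype G] [DecidableEq G]

theorem IsTilingPair.image_nsmul_of_prime {A B : Finset G} (h : IsTilingPair (A : Set G) B)
    {r : ℕ} [hr : Fact r.Prime] (hrA : ¬ r ∣ #A) : IsTilingPair (A.image (r • ·) : Set G) B := by
  refine isTilingPair_image_of_surjective _ h.card_mul_card.le fun g => ?_
  have : CharP (ZMod r)[G] r := charP_of_injective_algebraMap' (ZMod r) r
  set indG : (ZMod r)[G] := ∑ g : G, single g 1
  set indA : (ZMod r)[G] := ∑ a ∈ A, single a 1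
  have hAB : indA * ∑ b ∈ B, single b 1 = indG := by
    rw [sum_single_mul_sum_single]; exact h.sum_single_add
  have hpow : ∀ k : ℕ, indA ^ k * indG = (#A : ZMod r) ^ k • indG := by
    intro k
    induction k with
    | zero => simp
    | succ k ih =>
      rw [pow_succ', mul_assoc, ih, mul_smul_comm, sum_single_mul_sum_univ,
        ← Nat.cast_smul_eq_nsmul (ZMod r), smul_smul, ← pow_succ]
  have hcard : (#A : ZMod r) ≠ 0 := by rwa [Ne, ZMod.natCast_eq_zero_iff]
  have key : ∑ p ∈ A ×ˢ B, single (r • p.1 + p.2) (1 : ZMod r) = indG := calc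
    _ = indA ^ r * ∑ b ∈ B, single b 1 := by
      simp only [indA, sum_pow_char, single_pow, one_pow, sum_single_mul_sum_single]
    _ = indA ^ (r - 1) * indG := by
      rw [← hAB, ← mul_assoc, ← pow_succ, Nat.sub_add_cancel hr.out.one_le]
    _ = indG := by rw [hpow, ZMod.pow_card_sub_one_eq_one hcard, one_smul]
  have hg : (∑ p ∈ A ×ˢ B, single (r • p.1 + p.2) (1 : ZMod r)).coeff g ≠ 0 := by
    simp [key, indG, Finsupp.single_apply]
  obtain ⟨⟨a, b⟩, hab, rfl⟩ := exists_eq_of_coeff_sum_single_ne_zero hg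
  obtain ⟨ha, hb⟩ := mem_product.1 hab
  exact ⟨a, ha, b, hb, rfl⟩

theorem IsTilingPair.image_nsmul {A B : Finset G} (h : IsTilingPair (A : Set G) B) {q : ℕ}
    (hq : q ≠ 0) (hqA : q.Coprime #A) : IsTilingPair (A.image (q • ·) : Set G) B := by
  induction q using Nat.recOnMul generalizing A with
  | zero => exact (hq rfl).elim
  | one => simpa using h
  | prime r hr =>
    have : Fact r.Prime := ⟨hr⟩
    exact h.image_nsmul_of_prime (hr.coprime_iff_not_dvd.1 hqA)
  | mul s t ihs iht =>
    have ht := iht h (right_ne_zero_of_mul hq) (Nat.Coprime.coprime_mul_left hqA)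
    have hB : 0 < #B := by
      obtain ⟨⟨_, b⟩, ⟨-, hb, -⟩, -⟩ := h 0
      exact card_pos.2 ⟨b, hb⟩
    have hcard : #(A.image (t • ·)) = #A :=
      Nat.eq_of_mul_eq_mul_right hB (ht.card_mul_card.trans h.card_mul_card.symm)
    have hst := ihs ht (left_ne_zero_of_mul hq) (hcard ▸ Nat.Coprime.coprime_mul_right hqA)
    rwa [image_image, Function.comp_def, ← funext fun a => mul_smul s t a] at hst

end Tijdeman

theorem IsTilingPair.nsmul_notMem_diffSet {G : Type*} [AddCommGroup G] [Fintype G]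
    {A B : Finset G} (h : IsTilingPair (A : Set G) B) {q : ℕ} (hq : q ≠ 0) (hqA : q.Coprime #A)
    {d : G} (hd : d ∈ diffSet (A : Set G)) : q • d ∉ diffSet (B : Set G) := by
  classical
  rintro ⟨b, hb, b', hb', hne, hqd⟩
  obtain ⟨a, ha, a', ha', -, rfl⟩ := hd
  have hsum : q • a + b' = q • a' + b := by
    rw [smul_sub, sub_eq_sub_iff_add_eq_add] at hqd
    rw [hqd, add_comm]
  have := (h.image_nsmul hq hqA _).unique (y₁ := (q • a, b')) (y₂ := (q • a', b))
    ⟨by simpa using ⟨a, ha, rfl⟩, hb', rfl⟩ ⟨by simpa using ⟨a', ha', rfl⟩, hb, hsum.symm⟩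
  exact hne (congrArg Prod.snd this).symm

section Order

variable {G : Type*} [AddGroup G]

theorem exists_coprime_nsmul_eq_of_zmultiples_eq {d e : G} (hd : IsOfFinAddOrder d)
    (h : AddSubgroup.zmultiples d = AddSubgroup.zmultiples e) :
    ∃ q : ℕ, q.Coprime (addOrderOf d) ∧ q • d = e := by
  obtain ⟨q, rfl⟩ := hd.mem_multiples_iff_mem_zmultiples.2 (h ▸ AddSubgroup.mem_zmultiples e)
  refine ⟨q, ?_, rfl⟩
  have hord : addOrderOf (q • d) = addOrderOf d := by
    rw [← Nat.card_zmultiples, ← h, Nat.card_zmultiples]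
  rcases eq_or_ne q 0 with rfl | hq
  · simp_all [eq_comm]
  · rw [addOrderOf_nsmul' d hq, Nat.div_eq_self] at hord
    exact Nat.coprime_comm.1 (hord.resolve_left hd.addOrderOf_pos.ne')

theorem Nat.Coprime.coprime_natCard_of_addOrderOf {p n : ℕ} (hp : p.Prime)
    (hG : Nat.card G = p ^ n) {d : G} (hd : d ≠ 0) {q : ℕ} (hq : q.Coprime (addOrderOf d)) :
    q.Coprime (Nat.card G) := by
  obtain ⟨k, -, hk⟩ := (Nat.dvd_prime_pow hp).1 (hG ▸ addOrderOf_dvd_natCard d)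
  have hk0 : 0 < k := Nat.pos_of_ne_zero fun hk0 => hd (by simpa [hk0] using hk)
  rw [hk, Nat.coprime_pow_right_iff hk0] at hq
  exact hG ▸ hq.pow_right n

end Order

theorem diff_sets_avoid_generator_class_general (p m : ℕ) (hp : p.Prime)
    (A B : Set (ZMod (p ^ m) × ZMod (p ^ m))) (htile : IsTilingPair A B)
    (x : ZMod (p ^ m) × ZMod (p ^ m))
    (E : Set (ZMod (p ^ m) × ZMod (p ^ m)))
    (hE : E = {h | AddSubgroup.zmultiples h = AddSubgroup.zmultiples x})
    (hA : (diffSet A ∩ E).Nonempty) :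
    diffSet B ∩ E = ∅ := by
  have : NeZero (p ^ m) := ⟨pow_ne_zero m hp.ne_zero⟩
  obtain ⟨A, rfl⟩ := A.toFinite.exists_finset_coe
  obtain ⟨B, rfl⟩ := B.toFinite.exists_finset_coe
  subst hE
  refine Set.eq_empty_iff_forall_notMem.2 fun e ⟨heB, he⟩ => ?_
  obtain ⟨d, hdA, hd⟩ := hA
  obtain ⟨q, hqd, rfl⟩ :=
    exists_coprime_nsmul_eq_of_zmultiples_eq (isOfFinAddOrder_of_finite d) (hd.trans he.symm)
  have hq : q ≠ 0 := by
    rintro rfl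
    exact ne_zero_of_mem_diffSet heB (zero_smul ℕ d)
  have hcard : Nat.card (ZMod (p ^ m) × ZMod (p ^ m)) = p ^ (m + m) := by simp [pow_add]
  have hqG := hqd.coprime_natCard_of_addOrderOf hp hcard (ne_zero_of_mem_diffSet hdA)
  refine htile.nsmul_notMem_diffSet hq (hqG.coprime_dvd_right ?_) hdA heB
  rw [Nat.card_eq_fintype_card, ← htile.card_mul_card]
  exact dvd_mul_right _ _

theorem diff_sets_avoid_generator_class (p m : ℕ) (hp : p.Prime) (hm : 1 ≤ m)
    (A B : Set (ZMod (p ^ m) × ZMod (p ^ m))) (htile : IsTilingPair A B)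
    (x : ZMod (p ^ m) × ZMod (p ^ m))
    (E : Set (ZMod (p ^ m) × ZMod (p ^ m)))
    (hE : E = {h | AddSubgroup.zmultiples h = AddSubgroup.zmultiples x})
    (hA : (diffSet A ∩ E).Nonempty) :
    diffSet B ∩ E = ∅ :=
  diff_sets_avoid_generator_class_general p m hp A B htile x E hE hA
end
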